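/- On a sequence graph, for every real-valued flow f : E → ℝ with f(x) ≥ 0 for all edges x, there exist finitely many sequence traversals t_1, …, t_q and nonnegative real coefficients π_1, …, π_q such that f = ∑_{i=1}^q π_i · f(t_i), where f(t_i) denotes the thread flow of t_i. -/

import Mathlib

open scoped Classical
open Finset

noncomputable section

/-- A sequence graph: finite multigraph whose edges are split into segment
edges (`seg`) and bond edges, each segment edge having two distinct endpoints. -/
structure SeqGraph (V E : Type) where
  ends : E → Sym2 V
  seg : E → Prop
  seg_not_diag : ∀ x : E, seg x → ¬ (ends x).IsDiag

namespace SeqGraph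

variable {V E : Type} [Fintype V] [Fintype E]

/-- Incidence multiplicity of vertex `u` on edge `x`. -/
def mult (G : SeqGraph V E) (u : V) (x : E) : ℤ :=
  if G.ends x = s(u, u) then 2 else if u ∈ G.ends x then 1 else 0

/-- The balance condition: at each vertex the total weight of segment-edge
incidences equals the total weight of bond-edge incidences. -/
def IsFlow (G : SeqGraph V E) (f : E → ℤ) : Prop :=
  ∀ u : V,
    (∑ x : E, if G.seg x then G.mult u x * f x else 0) =
      ∑ x : E, if G.seg x then 0 else G.mult u x * f x

/-- ℓ¹ norm of an integer weighting. -/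
def l1 (f : E → ℤ) : ℤ := ∑ x : E, |f x|

/-- A (nonzero) integer flow is minimal if it admits no nontrivial ℓ¹-additive
decomposition into nonzero integer flows. -/
def MinimalFlow (G : SeqGraph V E) (f : E → ℤ) : Prop :=
  ¬ ∃ f₁ f₂ : E → ℤ, G.IsFlow f₁ ∧ G.IsFlow f₂ ∧ f₁ ≠ 0 ∧ f₂ ≠ 0 ∧
      f = f₁ + f₂ ∧ l1 f = l1 f₁ + l1 f₂

/-- A cycle traversal of length `L ≥ 1`. -/
structure CycleTraversal (G : SeqGraph V E) where
  L : ℕ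
  pos : L ≠ 0
  e : ZMod L → E
  v : ZMod L → V
  compat : ∀ i : ZMod L, G.ends (e i) = s(v (i - 1), v i)

variable {G : SeqGraph V E}

/-- Number of indices at which the traversal uses edge `x`. -/
def CycleTraversal.threadCount (t : G.CycleTraversal) (x : E) : ℕ :=
  haveI : NeZero t.L := ⟨t.pos⟩
  (Finset.univ.filter fun i : ZMod t.L => t.e i = x).card

/-- The thread flow of a traversal. -/
def CycleTraversal.threadFlow (t : G.CycleTraversal) : E → ℤ :=
  fun x => (t.threadCount x : ℤ)

/-- A sequence traversal: even length, alternating between segment edges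
(at even indices) and bond edges (at odd indices). -/
def CycleTraversal.IsSeqTraversal (t : G.CycleTraversal) : Prop :=
  Even t.L ∧ ∀ i : ZMod t.L, G.seg (t.e i) ↔ Even i.val

/-- Alternating weighting `∑ i, (-1)^i δ_{e i}` of an (even-length) traversal. -/
def CycleTraversal.altWeight (t : G.CycleTraversal) : E → ℤ :=
  haveI : NeZero t.L := ⟨t.pos⟩
  fun x => ∑ i : ZMod t.L, if t.e i = x then (-1 : ℤ) ^ i.val else 0

/-- Conjugate weighting: keep the value on segment edges, negate on bonds. -/
def conj (G : SeqGraph V E) (g : E → ℤ) : E → ℤ :=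
  fun x => if G.seg x then g x else -g x

/-- Alternating flow: the conjugate of the alternating weighting. -/
def CycleTraversal.altFlow (t : G.CycleTraversal) : E → ℤ :=
  G.conj t.altWeight

/-- Tight: equal edges only appear at indices of equal parity. -/
def CycleTraversal.Tight (t : G.CycleTraversal) : Prop :=
  ∀ i j : ZMod t.L, t.e i = t.e j → i.val % 2 = j.val % 2

/-- Synchronized: coinciding (distinct, same end vertex) indices differ by an
odd integer. -/
def CycleTraversal.Synchronized (t : G.CycleTraversal) : Prop :=
  ∀ i j : ZMod t.L, i ≠ j → t.v i = t.v j → Odd ((i.val : ℤ) - (j.val : ℤ))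

/-- Nested: no interleaved pairs of coinciding indices. -/
def CycleTraversal.Nested (t : G.CycleTraversal) : Prop :=
  ¬ ∃ i₁ i₂ j₁ j₂ : ZMod t.L,
      i₁.val < i₂.val ∧ i₂.val < j₁.val ∧ j₁.val < j₂.val ∧
      t.v i₁ = t.v j₁ ∧ t.v i₂ = t.v j₂

/-- Connectivity: any two vertices are joined by a finite walk along edges. -/
def Connected (G : SeqGraph V E) : Prop :=
  ∀ a b : V, ∃ (n : ℕ) (p : Fin (n + 1) → V), p 0 = a ∧ p (Fin.last n) = b ∧
    ∀ i : Fin n, ∃ x : E, G.ends x = s(p i.castSucc, p i.succ)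

end SeqGraph

/-- The balance condition for real-valued weightings. -/
def SeqGraph.IsFlowR {V E : Type} [Fintype V] [Fintype E]
    (G : SeqGraph V E) (f : E → ℝ) : Prop :=
  ∀ u : V,
    (∑ x : E, if G.seg x then (G.mult u x : ℝ) * f x else 0) =
      ∑ x : E, if G.seg x then 0 else (G.mult u x : ℝ) * f x


/-!
Peel off one sequence traversal at a time. If `f ≥ 0` is a nonzero flow, then at every vertex
the positive segment weight equals the positive bond weight, so from any edge with `f > 0`
one can continue along an edge of the other kind with `f > 0`. Iterating from a segment edge
gives an infinite alternating walk in the support of `f`; by pigeonhole two of its even-indexed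
vertices coincide, and the closed walk between them is a sequence traversal `t`. Subtracting
the largest multiple `c • t` that keeps `f - c • t ≥ 0` leaves a nonnegative flow with smaller
support, and induction on the size of the support concludes.
-/

open scoped NNReal

lemma ZMod.even_val_add_one_iff {L : ℕ} [NeZero L] (hL : Even L) (i : ZMod L) :
    Even (i + 1).val ↔ ¬ Even i.val := by
  have h2 : 2 ∣ L := even_iff_two_dvd.mp hL
  rw [ZMod.val_add, ZMod.val_one_eq_one_mod, Nat.add_mod_mod, Nat.even_iff,
    Nat.mod_mod_of_dvd _ h2, ← Nat.even_iff, Nat.even_add_one]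

/-- Summing `w (i - 1) + w i` over the indices `i` of one parity class counts every index once. -/
lemma ZMod.sum_ite_sub_one_add {L : ℕ} [NeZero L] {M : Type*} [AddCommMonoid M]
    (P : ZMod L → Prop) [DecidablePred P] (hP : ∀ i, P (i + 1) ↔ ¬ P i) (w : ZMod L → M) :
    ∑ i, (if P i then w (i - 1) + w i else 0) = ∑ i, w i := by
  have hshift : ∑ i, (if P i then w (i - 1) else 0) = ∑ i, if ¬ P i then w i else 0 :=
    Fintype.sum_equiv (Equiv.subRight 1) _ _ fun i => by
      simp only [Equiv.subRight_apply, ← hP, sub_add_cancel]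
  calc ∑ i, (if P i then w (i - 1) + w i else 0)
      = ∑ i, (if P i then w (i - 1) else 0) + ∑ i, if P i then w i else 0 := by
        rw [← Finset.sum_add_distrib]
        exact Finset.sum_congr rfl fun i _ => by split_ifs <;> simp
    _ = ∑ i, ((if ¬ P i then w i else 0) + if P i then w i else 0) := by
        rw [hshift, Finset.sum_add_distrib]
    _ = ∑ i, w i := Finset.sum_congr rfl fun i _ => by split_ifs <;> simp

lemma exists_nonneg_sub_smul_support_ssubset {ι : Type*} [Fintype ι] {f g : ι → ℝ}
    (hf : 0 ≤ f) (hg : 0 ≤ g) (hg0 : g ≠ 0) (hgf : Function.support g ⊆ Function.support f) :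
    ∃ c : ℝ, 0 ≤ c ∧ 0 ≤ f - c • g ∧ Function.support (f - c • g) ⊂ Function.support f := by
  obtain ⟨z, hz, hmin⟩ := (univ.filter fun x => g x ≠ 0).exists_min_image (fun x => f x / g x)
    (by simpa [Finset.filter_nonempty_iff, Function.ne_iff] using hg0)
  have hgz : 0 < g z := (hg z).lt_of_ne' (Finset.mem_filter.1 hz).2
  refine ⟨f z / g z, div_nonneg (hf z) (hg z), fun x => ?_, ?_⟩
  · simp only [Pi.zero_apply, Pi.sub_apply, Pi.smul_apply, smul_eq_mul, sub_nonneg]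
    by_cases hgx : g x = 0
    · simpa [hgx] using hf x
    · exact (le_div_iff₀ ((hg x).lt_of_ne' hgx)).1 (hmin x (by simp [hgx]))
  · refine (Set.ssubset_iff_of_subset fun x hx => ?_).2 ⟨z, hgf hgz.ne', ?_⟩
    · by_contra hfx
      have hgx : g x = 0 := Function.notMem_support.1 fun h => hfx (hgf h)
      simp_all
    · simp [hgz.ne']

namespace SeqGraph

variable {V E : Type} {G : SeqGraph V E}

lemma mult_pos_iff {u : V} {x : E} : 0 < G.mult u x ↔ u ∈ G.ends x := by
  unfold mult
  split_ifs <;> simp_all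

lemma mult_eq_of_ends_eq {u a b : V} {x : E} (h : G.ends x = s(a, b)) :
    G.mult u x = (if a = u then 1 else 0) + (if b = u then 1 else 0) := by
  unfold mult
  rw [h]
  by_cases ha : a = u <;> by_cases hb : b = u <;> simp [ha, hb, eq_comm (a := u)]

namespace CycleTraversal

instance (t : G.CycleTraversal) : NeZero t.L := ⟨t.pos⟩

lemma threadCount_ne_zero_iff {t : G.CycleTraversal} {x : E} :
    t.threadCount x ≠ 0 ↔ ∃ i, t.e i = x := by
  simp [threadCount]

lemma sum_mul_threadCount [Fintype E] {R : Type*} [CommSemiring R] (t : G.CycleTraversal)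
    (g : E → R) :
    ∑ x, g x * t.threadCount x = ∑ i, g (t.e i) := by
  calc ∑ x, g x * t.threadCount x = ∑ x, ∑ i with t.e i = x, g (t.e i) := by
        refine Finset.sum_congr rfl fun x _ => ?_
        rw [Finset.sum_congr rfl fun i hi => congrArg g (Finset.mem_filter.mp hi).2,
          Finset.sum_const, nsmul_eq_mul, mul_comm]
        rfl
    _ = ∑ i, g (t.e i) := Finset.sum_fiberwise _ _ _

lemma ends_eq_of_closedWalk {L : ℕ} [NeZero L] {v : ℕ → V} {e : ℕ → E}
    (hwalk : ∀ n < L, G.ends (e n) = s(v n, v (n + 1))) (hclosed : v L = v 0) (i : ZMod L) :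
    G.ends (e i.val) = s(v ((i - 1).val + 1), v (i.val + 1)) := by
  obtain ⟨j, rfl⟩ : ∃ j, j + 1 = i := ⟨i - 1, sub_add_cancel i 1⟩
  rw [add_sub_cancel_right, ZMod.val_add, ZMod.val_one_eq_one_mod, Nat.add_mod_mod]
  have hj := ZMod.val_lt j
  by_cases hlt : j.val + 1 < L
  · rw [Nat.mod_eq_of_lt hlt]
    exact hwalk _ hlt
  · rw [show j.val + 1 = L by omega, Nat.mod_self, hclosed]
    exact hwalk 0 (Nat.pos_of_neZero L)

/-- The closed walk `v 0, e 0, v 1, …, e (L - 1), v L = v 0` as a cycle traversal; index `i`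
carries the edge `e i` ending at `v (i + 1)`. -/
def ofClosedWalk (v : ℕ → V) (e : ℕ → E) {L : ℕ} (hL : L ≠ 0)
    (hwalk : ∀ n < L, G.ends (e n) = s(v n, v (n + 1))) (hclosed : v L = v 0) :
    G.CycleTraversal :=
  haveI : NeZero L := ⟨hL⟩
  ⟨L, hL, fun i => e i.val, fun i => v (i.val + 1), ends_eq_of_closedWalk hwalk hclosed⟩

lemma isSeqTraversal_ofClosedWalk {v : ℕ → V} {e : ℕ → E} {L : ℕ} (hL : L ≠ 0)
    (hwalk : ∀ n < L, G.ends (e n) = s(v n, v (n + 1))) (hclosed : v L = v 0) (hLeven : Even L)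
    (hseg : ∀ n < L, G.seg (e n) ↔ Even n) :
    (ofClosedWalk v e hL hwalk hclosed).IsSeqTraversal :=
  ⟨hLeven, fun i => hseg _ (ZMod.val_lt i)⟩

end CycleTraversal

lemma sum_ite_mult_mul_pos_iff [Fintype E] {f : E → ℝ} (hpos : 0 ≤ f) (u : V) (P : E → Prop)
    [DecidablePred P] :
    0 < (∑ x, if P x then (G.mult u x : ℝ) * f x else 0) ↔ ∃ x, P x ∧ u ∈ G.ends x ∧ 0 < f x := by
  have hmult : ∀ x, (0 : ℝ) ≤ G.mult u x := fun x => by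
    unfold mult
    split_ifs <;> norm_num
  rw [Finset.sum_pos_iff_of_nonneg fun x _ => by
    split_ifs
    exacts [mul_nonneg (hmult x) (hpos x), le_rfl]]
  refine exists_congr fun x => ?_
  split_ifs with hP
  · simp only [hP, true_and, mem_univ, ← mult_pos_iff (G := G), ← Int.cast_pos (R := ℝ)]
    simp [mul_pos_iff, (hmult x).not_gt]
  · simp [hP]

variable [Fintype V] [Fintype E]

lemma isFlowR_iff {f : E → ℝ} :
    G.IsFlowR f ↔ ∀ u, (∑ x, if G.seg x then (G.mult u x : ℝ) * f x else 0) =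
      ∑ x, if ¬ G.seg x then (G.mult u x : ℝ) * f x else 0 := by
  simp only [ite_not]
  rfl

lemma IsFlowR.sub_smul {f g : E → ℝ} (hf : G.IsFlowR f) (hg : G.IsFlowR g) (c : ℝ) :
    G.IsFlowR (f - c • g) := by
  have hlin : ∀ (P : E → Prop) [DecidablePred P] (u : V),
      (∑ x, if P x then (G.mult u x : ℝ) * (f - c • g) x else 0) =
        (∑ x, if P x then (G.mult u x : ℝ) * f x else 0) -
        c * ∑ x, if P x then (G.mult u x : ℝ) * g x else 0 := fun P _ u => by
    rw [Finset.mul_sum, ← Finset.sum_sub_distrib]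
    exact Finset.sum_congr rfl fun x _ => by
      simp only [Pi.sub_apply, Pi.smul_apply, smul_eq_mul]
      split_ifs <;> ring
  rw [isFlowR_iff] at *
  intro u
  rw [hlin G.seg u, hf u, hg u]
  exact (hlin (¬ G.seg ·) u).symm

lemma CycleTraversal.isFlowR_threadCount {t : G.CycleTraversal} (ht : t.IsSeqTraversal) :
    G.IsFlowR fun x => (t.threadCount x : ℝ) := by
  rw [isFlowR_iff]
  intro u
  let w : ZMod t.L → ℝ := fun i => if t.v i = u then 1 else 0
  have hmult : ∀ i, (G.mult u (t.e i) : ℝ) = w (i - 1) + w i := fun i => by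
    rw [mult_eq_of_ends_eq (t.compat i)]
    push_cast
    rfl
  have hside : ∀ (Q : E → Prop) [DecidablePred Q] (P : ZMod t.L → Prop) [DecidablePred P],
      (∀ i, P (i + 1) ↔ ¬ P i) → (∀ i, Q (t.e i) ↔ P i) →
      (∑ x, if Q x then (G.mult u x : ℝ) * t.threadCount x else 0) = ∑ i, w i := by
    intro Q _ P _ hP hQ
    simp only [← ite_zero_mul]
    rw [t.sum_mul_threadCount]
    exact (Finset.sum_congr rfl fun i _ => by simp only [hQ, hmult]).trans
      (ZMod.sum_ite_sub_one_add P hP w)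
  have hpar := ZMod.even_val_add_one_iff ht.1
  exact (hside _ _ hpar ht.2).trans
    (hside _ (¬ Even ·.val) (fun i => not_congr (hpar i)) fun i => not_congr (ht.2 i)).symm

lemma IsFlowR.exists_adjacent {f : E → ℝ} (hf : G.IsFlowR f) (hpos : 0 ≤ f) {u : V} {x : E}
    (hx : 0 < f x) (hu : u ∈ G.ends x) :
    ∃ y, 0 < f y ∧ u ∈ G.ends y ∧ (G.seg y ↔ ¬ G.seg x) := by
  have hbal := isFlowR_iff.1 hf u
  by_cases hs : G.seg x
  · have hsum := (sum_ite_mult_mul_pos_iff hpos u G.seg).2 ⟨x, hs, hu, hx⟩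
    rw [hbal] at hsum
    obtain ⟨y, hy, huy, hfy⟩ := (sum_ite_mult_mul_pos_iff hpos u _).1 hsum
    exact ⟨y, hfy, huy, by simp [hs, hy]⟩
  · have hsum := (sum_ite_mult_mul_pos_iff hpos u (¬ G.seg ·)).2 ⟨x, hs, hu, hx⟩
    rw [← hbal] at hsum
    obtain ⟨y, hy, huy, hfy⟩ := (sum_ite_mult_mul_pos_iff hpos u _).1 hsum
    exact ⟨y, hfy, huy, by simp [hs, hy]⟩

lemma IsFlowR.exists_alternating_walk {f : E → ℝ} (hf : G.IsFlowR f) (hpos : 0 ≤ f) {x : E}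
    {a b : V} (hx : 0 < f x) (hseg : G.seg x) (hab : G.ends x = s(a, b)) :
    ∃ (v : ℕ → V) (e : ℕ → E), ∀ n,
      0 < f (e n) ∧ G.ends (e n) = s(v n, v (n + 1)) ∧ (G.seg (e n) ↔ Even n) := by
  let Dart := {d : E × V × V // 0 < f d.1 ∧ G.ends d.1 = s(d.2.1, d.2.2)}
  have hnext : ∀ d : Dart, ∃ d' : Dart, d'.1.2.1 = d.1.2.2 ∧ (G.seg d'.1.1 ↔ ¬ G.seg d.1.1) := by
    rintro ⟨⟨x, a, b⟩, hx, hab⟩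
    obtain ⟨y, hy, hby, hseg⟩ := hf.exists_adjacent hpos hx (hab ▸ Sym2.mem_mk_right a b)
    obtain ⟨w, hw⟩ := Sym2.mem_iff_exists.1 hby
    exact ⟨⟨(y, b, w), hy, hw⟩, rfl, hseg⟩
  choose next hnext_fst hnext_seg using hnext
  let d : ℕ → Dart := fun n => next^[n] ⟨(x, a, b), hx, hab⟩
  have hd_succ : ∀ n, d (n + 1) = next (d n) := fun n => Function.iterate_succ_apply' _ _ _
  refine ⟨fun n => (d n).1.2.1, fun n => (d n).1.1, fun n => ⟨(d n).2.1, ?_, ?_⟩⟩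
  · dsimp only
    rw [(d n).2.2, hd_succ, hnext_fst]
  · dsimp only
    induction n with
    | zero => exact iff_of_true hseg Even.zero
    | succ n ih => rw [hd_succ, hnext_seg, ih, Nat.even_add_one]

lemma IsFlowR.exists_seg_of_ne_zero {f : E → ℝ} (hf : G.IsFlowR f) (hpos : 0 ≤ f) (h0 : f ≠ 0) :
    ∃ x a b, 0 < f x ∧ G.seg x ∧ G.ends x = s(a, b) := by
  obtain ⟨x, hx⟩ := Function.ne_iff.1 h0
  obtain ⟨a, b, hab⟩ : ∃ a b, G.ends x = s(a, b) := ⟨_, _, (G.ends x).out_eq.symm⟩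
  have hx : 0 < f x := (hpos x).lt_of_ne' hx
  by_cases hs : G.seg x
  · exact ⟨x, a, b, hx, hs, hab⟩
  · obtain ⟨y, hy, hay, hys⟩ := hf.exists_adjacent hpos hx (hab ▸ Sym2.mem_mk_left a b)
    obtain ⟨w, hw⟩ := Sym2.mem_iff_exists.1 hay
    exact ⟨y, a, w, hy, hys.2 hs, hw⟩

lemma IsFlowR.exists_isSeqTraversal {f : E → ℝ} (hf : G.IsFlowR f) (hpos : 0 ≤ f) (h0 : f ≠ 0) :
    ∃ t : G.CycleTraversal, t.IsSeqTraversal ∧ (fun x => (t.threadCount x : ℝ)) ≠ 0 ∧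
      Function.support (fun x => (t.threadCount x : ℝ)) ⊆ Function.support f := by
  obtain ⟨x, a, b, hx, hseg, hab⟩ := hf.exists_seg_of_ne_zero hpos h0
  obtain ⟨v, e, hwalk⟩ := hf.exists_alternating_walk hpos hx hseg hab
  obtain ⟨A, B, hAB, hvAB⟩ := Set.finite_univ.exists_lt_map_eq_of_forall_mem
    (f := fun n => v (2 * n)) fun _ => Set.mem_univ _
  have hL : 2 * (B - A) ≠ 0 := by omega
  have hclosed : v (2 * A + 2 * (B - A)) = v (2 * A + 0) := by
    rw [show 2 * A + 2 * (B - A) = 2 * B by omega]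
    exact hvAB.symm
  let t := CycleTraversal.ofClosedWalk (fun n => v (2 * A + n)) (fun n => e (2 * A + n)) hL
    (fun n _ => (hwalk _).2.1) hclosed
  refine ⟨t, CycleTraversal.isSeqTraversal_ofClosedWalk hL _ hclosed ⟨B - A, two_mul _⟩
    fun n _ => by simp [(hwalk _).2.2, Nat.even_add], fun h => ?_, fun y hy => ?_⟩
  · have h0 : t.threadCount (t.e 0) = 0 := by simpa using congrFun h (t.e 0)
    exact CycleTraversal.threadCount_ne_zero_iff.2 ⟨0, rfl⟩ h0
  · obtain ⟨i, rfl⟩ := CycleTraversal.threadCount_ne_zero_iff.1 (by simpa using hy)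
    exact (hwalk _).1.ne'

def seqThreadFlows (G : SeqGraph V E) : Set (E → ℝ) :=
  {g | ∃ t : G.CycleTraversal, t.IsSeqTraversal ∧ (fun x => (t.threadCount x : ℝ)) = g}

theorem IsFlowR.mem_span_seqThreadFlows {f : E → ℝ} (hf : G.IsFlowR f) (hpos : 0 ≤ f) :
    f ∈ Submodule.span ℝ≥0 G.seqThreadFlows := by
  by_cases h0 : f = 0
  · exact h0 ▸ Submodule.zero_mem _
  obtain ⟨t, ht, ht0, hsupp⟩ := hf.exists_isSeqTraversal hpos h0
  obtain ⟨c, hc, hnonneg, hssub⟩ :=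
    exists_nonneg_sub_smul_support_ssubset hpos (fun x => Nat.cast_nonneg _) ht0 hsupp
  have hrest := ((hf.sub_smul (CycleTraversal.isFlowR_threadCount ht) c).mem_span_seqThreadFlows
    hnonneg)
  have ht_mem : c • (fun x => (t.threadCount x : ℝ)) ∈ Submodule.span ℝ≥0 G.seqThreadFlows :=
    Submodule.smul_mem _ (⟨c, hc⟩ : ℝ≥0) (Submodule.subset_span ⟨t, ht, rfl⟩)
  simpa using add_mem hrest ht_mem
termination_by (Function.support f).ncard
decreasing_by exact Set.ncard_lt_ncard hssub

end SeqGraph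

/-- Every nonnegative real-valued flow is a nonnegative linear combination of
thread flows of sequence traversals. -/
theorem stmt_6 (V E : Type) [Fintype V] [Fintype E] (G : SeqGraph V E)
    (f : E → ℝ) (hf : G.IsFlowR f) (hpos : ∀ x : E, 0 ≤ f x) :
    ∃ (q : ℕ) (T : Fin q → G.CycleTraversal) (π : Fin q → ℝ),
      (∀ k : Fin q, 0 ≤ π k) ∧
      (∀ k : Fin q, (T k).IsSeqTraversal) ∧
      f = fun x : E => ∑ k : Fin q, π k * ((T k).threadCount x : ℝ) := by
  obtain ⟨q, π, g, hfg⟩ := Submodule.mem_span_set'.1 (hf.mem_span_seqThreadFlows hpos)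
  choose T hT hTg using fun k => (g k).2
  refine ⟨q, T, fun k => π k, fun k => (π k).2, hT, ?_⟩
  rw [← hfg]
  funext x
  simp [Finset.sum_apply, NNReal.smul_def, ← hTg]
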